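/- arXiv:0811.2605 — 2 statements merged into one kernel-verified Lean document; each statement's English description precedes it below -/
import Mathlib

section
/- With z_0, ..., z_{N+1} distinct, W(z) = ∏_{j=0}^{N+1}(z - z_j), and Θ(z) = Θ_∞ ∏_{r=1}^{N}(z - q_r) with the q_r pairwise distinct and distinct from all z_j, for any r, s ∈ {1, ..., N}: ∑_{j=0}^{N+1} Θ(z_j)/(W'(z_j)(z_j - q_r)(z_j - q_s)) = -δ_{r,s}·Θ'(q_r)/W(q_r). -/
/-!
Write `Θ = (X - q s) * P` with `P = Θ∞ ∏_{a ≠ s} (X - q a)`. The summand is then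
`P(z j) / (W'(z j) (z j - q r))`, and since `deg P < N + 2`, the barycentric form of Lagrange
interpolation of `P` at the nodes `z j` turns the sum into `-P(q r) / W(q r)`. Finally
`P(q r)` vanishes for `r ≠ s` and equals `Θ'(q s)` for `r = s`.
-/

open Polynomial Finset Lagrange

namespace Lagrange

variable {F ι : Type*} [Field F] [DecidableEq ι] {s : Finset ι} {v : ι → F}

theorem sum_eval_div_derivative_nodal_mul_sub (hvs : Set.InjOn v s) {P : F[X]}
    (hP : P.degree < #s) {x : F} (hx : ∀ i ∈ s, x ≠ v i) :
    ∑ i ∈ s, P.eval (v i) / ((derivative (nodal s v)).eval (v i) * (v i - x)) =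
      -(P.eval x / (nodal s v).eval x) := by
  have hbary := eval_interpolate_not_at_node (fun i => P.eval (v i)) hx
  rw [← eq_interpolate hvs hP] at hbary
  rw [hbary, mul_div_cancel_left₀ _ (eval_nodal_not_at_node hx), ← sum_neg_distrib]
  refine sum_congr rfl fun i hi => ?_
  rw [nodalWeight_eq_eval_derivative_nodal hi, ← neg_sub (v i) x, inv_neg, div_eq_mul_inv,
    mul_inv]
  ring

theorem eval_nodal_erase {i j : ι} (hi : i ∈ s) :
    (nodal (s.erase j) v).eval (v i) =
      if i = j then (derivative (nodal s v)).eval (v i) else 0 := by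
  split_ifs with hij
  · rw [hij, eval_nodal_derivative_eval_node_eq (hij ▸ hi)]
  · exact eval_nodal_at_node (mem_erase.2 ⟨hij, hi⟩)

end Lagrange

theorem stmt_3_general (N : ℕ) (z : Fin (N + 2) → ℂ) (hz : Function.Injective z)
    (q : Fin N → ℂ)
    (Θinf : ℂ)
    (hqz : ∀ r j, q r ≠ z j)
    (W Θ : Polynomial ℂ)
    (hW : W = ∏ j, (X - C (z j))) (hΘ : Θ = C Θinf * ∏ r, (X - C (q r)))
    (r s : Fin N) :
    ∑ j, Θ.eval (z j) / ((derivative W).eval (z j) * (z j - q r) * (z j - q s)) =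
      -(if r = s then (derivative Θ).eval (q r) / W.eval (q r) else 0) := by
  rw [← nodal_eq] at hW hΘ
  subst hW hΘ
  set P := C Θinf * nodal (univ.erase s) q with hP_def
  have hfactor : C Θinf * nodal univ q = (X - C (q s)) * P := by
    rw [nodal_eq_mul_nodal_erase (mem_univ s), mul_left_comm]
  have hdeg : P.degree < #(univ : Finset (Fin (N + 2))) := by
    calc P.degree ≤ (nodal (univ.erase s) q).degree := by
          rw [hP_def, C_mul']; exact degree_smul_le _ _
      _ < _ := by
          simp only [degree_nodal, card_erase_of_mem, mem_univ, card_univ, Fintype.card_fin]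
          exact_mod_cast (by omega : N - 1 < N + 2)
  calc _ = ∑ j, P.eval (z j) / ((derivative (nodal univ z)).eval (z j) * (z j - q r)) := by
        refine sum_congr rfl fun j _ => ?_
        rw [hfactor, eval_mul, eval_sub, eval_X, eval_C, mul_comm,
          mul_div_mul_right _ _ (sub_ne_zero.2 (hqz s j).symm)]
    _ = -(P.eval (q r) / (nodal univ z).eval (q r)) :=
        sum_eval_div_derivative_nodal_mul_sub hz.injOn hdeg fun j _ => hqz r j
    _ = _ := by
        rw [hP_def, eval_mul, eval_C, eval_nodal_erase (mem_univ r), derivative_C_mul, eval_mul,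
          eval_C]
        split_ifs <;> simp

/-- With `z 0, ..., z (N+1)` distinct, `W = ∏ (X - z j)`, and
`Θ = Θ∞ ∏ (X - q r)` with the `q r` pairwise distinct and distinct from all `z j`,
for any `r s`: `∑ j Θ(z j)/(W'(z j)(z j - q r)(z j - q s)) = -δ_{r,s} Θ'(q r)/W(q r)`. -/
theorem stmt_3 (N : ℕ) (z : Fin (N + 2) → ℂ) (hz : Function.Injective z)
    (q : Fin N → ℂ) (hq : Function.Injective q)
    (Θinf : ℂ) (hΘinf : Θinf ≠ 0)
    (hqz : ∀ r j, q r ≠ z j)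
    (W Θ : Polynomial ℂ)
    (hW : W = ∏ j, (X - C (z j))) (hΘ : Θ = C Θinf * ∏ r, (X - C (q r)))
    (r s : Fin N) :
    ∑ j, Θ.eval (z j) / ((derivative W).eval (z j) * (z j - q r) * (z j - q s)) =
      -(if r = s then (derivative Θ).eval (q r) / W.eval (q r) else 0) :=
  stmt_3_general N z hz q Θinf hqz W Θ hW hΘ r s
end

section
/- Assume the system Y_{n+1} = K_n Y_n with K_n = (1/κ_n)[[κ_{n+1}z, φ_{n+1}(0)],[φ̄_{n+1}(0)z, κ_{n+1}]] and κ_{n+1}² - κ_n² = φ_{n+1}(0)φ̄_{n+1}(0), where Y_n has columns built from (φ_n, φ*_n) and (ε_n, -ε*_n). If det Y_n(z) = c_n·z^n for some constant c_n, then det Y_{n+1}(z) = c_n·z^{n+1}; consequently if det Y_0(z) = -2 then det Y_n(z) = -2·z^n for all n, which is equivalent to the Casoratian identity φ_n(z)·ε*_n(z) + ε_n(z)·φ*_n(z) = 2·z^n (after dividing out w(z)). -/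
open Polynomial Matrix

/-- For the recurrence `Y (n+1) = K n * Y n` with transfer matrices
`K n = (1/κ n)·[[κ (n+1) z, a n], [b n z, κ (n+1)]]` satisfying the norm relation
`κ (n+1)² - κ n² = a n * b n`: if `det (Y n) = c·z^n` then `det (Y (n+1)) = c·z^{n+1}`;
consequently if `det (Y 0) = -2` then `det (Y n) = -2·z^n` for all `n` (which is the
Casoratian identity `φ_n ε*_n + ε_n φ*_n = 2 z^n`). -/
theorem stmt_9 (κ a b : ℕ → ℂ) (hκ : ∀ n, κ n ≠ 0)
    (hnorm : ∀ n, κ (n + 1) ^ 2 - κ n ^ 2 = a n * b n)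
    (K Y : ℕ → Matrix (Fin 2) (Fin 2) (Polynomial ℂ))
    (hK : ∀ n, K n = !![C (κ (n + 1) / κ n) * X, C (a n / κ n);
                        C (b n / κ n) * X, C (κ (n + 1) / κ n)])
    (hrec : ∀ n, Y (n + 1) = K n * Y n) :
    (∀ n (c : ℂ), (Y n).det = C c * X ^ n → (Y (n + 1)).det = C c * X ^ (n + 1)) ∧
    ((Y 0).det = C (-2) → ∀ n, (Y n).det = C (-2) * X ^ n) := by
  have hdetK : ∀ n, (K n).det = X := by
    intro n
    rw [hK n, Matrix.det_fin_two_of]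
    have h : κ (n + 1) / κ n * (κ (n + 1) / κ n) - a n / κ n * (b n / κ n) = 1 := by
      rw [div_mul_div_comm, div_mul_div_comm, div_sub_div_same,
        show κ (n + 1) * κ (n + 1) - a n * b n = κ n * κ n by linear_combination hnorm n]
      exact div_self (mul_ne_zero (hκ n) (hκ n))
    calc C (κ (n + 1) / κ n) * X * C (κ (n + 1) / κ n) - C (a n / κ n) * (C (b n / κ n) * X)
        = C (κ (n + 1) / κ n * (κ (n + 1) / κ n) - a n / κ n * (b n / κ n)) * X := by
          simp [C_mul, sub_mul]; ring
      _ = X := by rw [h, Polynomial.C_1, one_mul]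
  have step : ∀ n (c : ℂ), (Y n).det = C c * X ^ n → (Y (n + 1)).det = C c * X ^ (n + 1) := by
    intro n c h
    rw [hrec n, Matrix.det_mul, hdetK n, h, pow_succ]
    ring
  refine ⟨step, fun h0 n => ?_⟩
  induction n with
  | zero => simpa using h0
  | succ n ih => exact step n _ ih
end
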